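/- arXiv:2110.09976 — 3 statements merged into one kernel-verified Lean document; each statement's English description precedes it below -/
import Mathlib

section
/- Let P be a punctured N-gon with boundary vertices labeled 1,...,N, and let Arcs_∂P = {(a,b) : 1 ≤ a,b ≤ N, a ≠ b, a+1 ≢ b (mod N)} be the set of boundary arcs. Let S be a 2N-gon with vertices labeled 1⁻,1⁺,2⁻,2⁺,...,N⁻,N⁺. Then the map χ sending (a,b) to the diagonal (a⁻, b⁺) is a bijection from Arcs_∂P onto the set of 2-diagonals of S. -/
/-- 2-diagonal of a polygon with `2*N` vertices, modelled on `ZMod (2*N)`: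
both parts obtained by cutting the polygon along the diagonal from `x` to `y`
have an even number of vertices, at least 4 each. -/
def IsTwoDiag (N : ℕ) (x y : ZMod (2 * N)) : Prop :=
  Even ((y - x).val + 1) ∧ 4 ≤ (y - x).val + 1 ∧
    Even ((x - y).val + 1) ∧ 4 ≤ (x - y).val + 1

/-- The vertices of the `2N`-gon `S` are indexed by pairs `(i,ε)` with `i ∈ ZMod N` and
`ε ∈ {+,−}`, arranged cyclically as `1⁺,1⁻,2⁺,2⁻,…,N⁺,N⁻`; we model the vertex `i⁺` by
the residue `2*i` and the vertex `i⁻` by the residue `2*i+1` in `ZMod (2*N)`.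
The map `χ` sends a boundary arc `(a,b)` of the punctured `N`-gon to the unordered pair
of vertices `{a⁻, b⁺}` of `S`. -/
def chi (N : ℕ) (p : ZMod N × ZMod N) : Sym2 (ZMod (2 * N)) :=
  s(((2 * p.1.val + 1 : ℕ) : ZMod (2 * N)), ((2 * p.2.val : ℕ) : ZMod (2 * N)))

lemma sub_val' (m : ℕ) [NeZero m] (u v : ZMod m) :
    (v - u).val = (v.val + (m - u.val)) % m := by
  have h1 : v - u = ((v.val + (m - u.val) : ℕ) : ZMod m) := by
    push_cast [Nat.cast_sub (ZMod.val_le u)]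
    simp [ZMod.natCast_val, ZMod.cast_id]
    ring
  rw [h1, ZMod.val_natCast]

lemma mod_resolve (m t : ℕ) (h : t < 2 * m) :
    t % m = t ∨ (m ≤ t ∧ t % m = t - m) := by
  rcases Nat.lt_or_ge t m with h' | h'
  · exact Or.inl (Nat.mod_eq_of_lt h')
  · exact Or.inr ⟨h', by rw [Nat.mod_eq_sub_mod h', Nat.mod_eq_of_lt (by omega)]⟩

lemma chi_key (N : ℕ) (hN : 3 ≤ N) (x y : ZMod (2 * N)) (hxo : x.val % 2 = 1)
    (hd : IsTwoDiag N x y) :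
    ∃ p : ZMod N × ZMod N, (p.2 ≠ p.1 ∧ p.2 ≠ p.1 + 1) ∧ chi N p = s(x, y) := by
  haveI : NeZero N := ⟨by omega⟩
  haveI : NeZero (2 * N) := ⟨by omega⟩
  obtain ⟨h1, h2, h3, h4⟩ := hd
  rw [Nat.even_add_one, Nat.not_even_iff] at h1 h3
  have hxlt : x.val < 2 * N := ZMod.val_lt x
  have hylt : y.val < 2 * N := ZMod.val_lt y
  have hd1lt : (y - x).val < 2 * N := ZMod.val_lt _
  have hd2lt : (x - y).val < 2 * N := ZMod.val_lt _
  have hd1 : (y - x).val = (y.val + (2 * N - x.val)) % (2 * N) := sub_val' _ _ _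
  have hd2 : (x - y).val = (x.val + (2 * N - y.val)) % (2 * N) := sub_val' _ _ _
  have hr1 := mod_resolve (2 * N) (y.val + (2 * N - x.val)) (by omega)
  have hr2 := mod_resolve (2 * N) (x.val + (2 * N - y.val)) (by omega)
  rw [← hd1] at hr1
  rw [← hd2] at hr2
  have hyo : y.val % 2 = 0 := by omega
  have hAlt : (x.val - 1) / 2 < N := by omega
  have hBlt : y.val / 2 < N := by omega
  have hA : (((x.val - 1) / 2 : ℕ) : ZMod N).val = (x.val - 1) / 2 :=
    ZMod.val_natCast_of_lt hAlt
  have hB : ((y.val / 2 : ℕ) : ZMod N).val = y.val / 2 := ZMod.val_natCast_of_lt hBlt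
  have h1v : (1 : ZMod N).val = 1 := by
    rw [ZMod.val_one_eq_one_mod]; exact Nat.mod_eq_of_lt (by omega)
  have hA1 : ((((x.val - 1) / 2 : ℕ) : ZMod N) + 1).val
      = ((((x.val - 1) / 2 : ℕ) : ZMod N).val + 1) % N := by
    rw [ZMod.val_add, h1v]
  have hmodA := mod_resolve N ((((x.val - 1) / 2 : ℕ) : ZMod N).val + 1) (by omega)
  have hmodAlt : ((((x.val - 1) / 2 : ℕ) : ZMod N).val + 1) % N < N :=
    Nat.mod_lt _ (by omega)
  refine ⟨((((x.val - 1) / 2 : ℕ) : ZMod N), ((y.val / 2 : ℕ) : ZMod N)), ⟨?_, ?_⟩, ?_⟩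
  · show ((y.val / 2 : ℕ) : ZMod N) ≠ (((x.val - 1) / 2 : ℕ) : ZMod N)
    intro h
    apply congrArg ZMod.val at h
    omega
  · show ((y.val / 2 : ℕ) : ZMod N) ≠ (((x.val - 1) / 2 : ℕ) : ZMod N) + 1
    intro h
    apply congrArg ZMod.val at h
    omega
  · show s(((2 * (((x.val - 1) / 2 : ℕ) : ZMod N).val + 1 : ℕ) : ZMod (2 * N)),
        ((2 * ((y.val / 2 : ℕ) : ZMod N).val : ℕ) : ZMod (2 * N))) = s(x, y)
    rw [hA, hB]
    have ex : ((2 * ((x.val - 1) / 2) + 1 : ℕ) : ZMod (2 * N)) = x := by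
      rw [show 2 * ((x.val - 1) / 2) + 1 = x.val by omega]
      exact ZMod.natCast_rightInverse x
    have ey : ((2 * (y.val / 2) : ℕ) : ZMod (2 * N)) = y := by
      rw [show 2 * (y.val / 2) = y.val by omega]
      exact ZMod.natCast_rightInverse y
    rw [ex, ey]

/-- `χ : (a,b) ↦ {a⁻, b⁺}` is a bijection from the set
`Arcs_∂P = {(a,b) : a,b ∈ Z/N, b ≠ a, b ≠ a+1}` of boundary arcs of the punctured
`N`-gon onto the set of 2-diagonals of the `2N`-gon `S`. -/
theorem chi_bijective (N : ℕ) (hN : 3 ≤ N) :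
    Set.BijOn (chi N)
      {p : ZMod N × ZMod N | p.2 ≠ p.1 ∧ p.2 ≠ p.1 + 1}
      {z : Sym2 (ZMod (2 * N)) | ∃ x y, z = s(x, y) ∧ IsTwoDiag N x y} := by
  haveI : NeZero N := ⟨by omega⟩
  haveI : NeZero (2 * N) := ⟨by omega⟩
  have h1v : (1 : ZMod N).val = 1 := by
    rw [ZMod.val_one_eq_one_mod]; exact Nat.mod_eq_of_lt (by omega)
  refine ⟨?_, ?_, ?_⟩
  · -- MapsTo
    rintro ⟨a, b⟩ ⟨hba, hba1⟩
    have hAlt : a.val < N := ZMod.val_lt a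
    have hBlt : b.val < N := ZMod.val_lt b
    refine ⟨((2 * a.val + 1 : ℕ) : ZMod (2 * N)), ((2 * b.val : ℕ) : ZMod (2 * N)),
      rfl, ?_⟩
    have hu : ((2 * a.val + 1 : ℕ) : ZMod (2 * N)).val = 2 * a.val + 1 :=
      ZMod.val_natCast_of_lt (by omega)
    have hv : ((2 * b.val : ℕ) : ZMod (2 * N)).val = 2 * b.val :=
      ZMod.val_natCast_of_lt (by omega)
    have hd1lt : (((2 * b.val : ℕ) : ZMod (2 * N))
        - ((2 * a.val + 1 : ℕ) : ZMod (2 * N))).val < 2 * N := ZMod.val_lt _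
    have hd2lt : (((2 * a.val + 1 : ℕ) : ZMod (2 * N))
        - ((2 * b.val : ℕ) : ZMod (2 * N))).val < 2 * N := ZMod.val_lt _
    have hd1 := sub_val' (2 * N) ((2 * a.val + 1 : ℕ) : ZMod (2 * N))
      ((2 * b.val : ℕ) : ZMod (2 * N))
    have hd2 := sub_val' (2 * N) ((2 * b.val : ℕ) : ZMod (2 * N))
      ((2 * a.val + 1 : ℕ) : ZMod (2 * N))
    rw [hu, hv] at hd1 hd2
    have hr1 := mod_resolve (2 * N) (2 * b.val + (2 * N - (2 * a.val + 1))) (by omega)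
    have hr2 := mod_resolve (2 * N) (2 * a.val + 1 + (2 * N - 2 * b.val)) (by omega)
    rw [← hd1] at hr1
    rw [← hd2] at hr2
    have hBA : b.val ≠ a.val := fun h => hba (ZMod.val_injective N h)
    have hA1v : (a + 1).val = (a.val + 1) % N := by rw [ZMod.val_add, h1v]
    have hBne : b.val ≠ (a.val + 1) % N :=
      fun h => hba1 (ZMod.val_injective N (h.trans hA1v.symm))
    have hmodA := mod_resolve N (a.val + 1) (by omega)
    have hmodAlt : (a.val + 1) % N < N := Nat.mod_lt _ (by omega)
    refine ⟨?_, ?_, ?_, ?_⟩ <;>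
      first
        | (rw [Nat.even_add_one, Nat.not_even_iff]; omega)
        | omega
  · -- InjOn
    rintro ⟨a, b⟩ ⟨-, -⟩ ⟨c, d⟩ ⟨-, -⟩ h
    have ha : a.val < N := ZMod.val_lt a
    have hb : b.val < N := ZMod.val_lt b
    have hc : c.val < N := ZMod.val_lt c
    have hdd : d.val < N := ZMod.val_lt d
    have e1 : ((2 * a.val + 1 : ℕ) : ZMod (2 * N)).val = 2 * a.val + 1 :=
      ZMod.val_natCast_of_lt (by omega)
    have e2 : ((2 * b.val : ℕ) : ZMod (2 * N)).val = 2 * b.val :=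
      ZMod.val_natCast_of_lt (by omega)
    have e3 : ((2 * c.val + 1 : ℕ) : ZMod (2 * N)).val = 2 * c.val + 1 :=
      ZMod.val_natCast_of_lt (by omega)
    have e4 : ((2 * d.val : ℕ) : ZMod (2 * N)).val = 2 * d.val :=
      ZMod.val_natCast_of_lt (by omega)
    have h' : s(((2 * a.val + 1 : ℕ) : ZMod (2 * N)), ((2 * b.val : ℕ) : ZMod (2 * N)))
        = s(((2 * c.val + 1 : ℕ) : ZMod (2 * N)), ((2 * d.val : ℕ) : ZMod (2 * N))) := h
    rw [Sym2.eq_iff] at h'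
    rcases h' with ⟨h1, h2⟩ | ⟨h1, h2⟩ <;>
      apply congrArg ZMod.val at h1 <;> apply congrArg ZMod.val at h2
    · have hac : a = c := ZMod.val_injective N (by omega)
      have hbd : b = d := ZMod.val_injective N (by omega)
      rw [hac, hbd]
    · omega
  · -- SurjOn
    rintro z ⟨x, y, rfl, hd⟩
    have h1 := hd.1
    rw [Nat.even_add_one, Nat.not_even_iff] at h1
    have hxlt : x.val < 2 * N := ZMod.val_lt x
    have hylt : y.val < 2 * N := ZMod.val_lt y
    have hd1lt : (y - x).val < 2 * N := ZMod.val_lt _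
    have hd1 : (y - x).val = (y.val + (2 * N - x.val)) % (2 * N) := sub_val' _ _ _
    have hr1 := mod_resolve (2 * N) (y.val + (2 * N - x.val)) (by omega)
    rw [← hd1] at hr1
    have hpar : x.val % 2 = 1 ∨ y.val % 2 = 1 := by omega
    rcases hpar with hxo | hyo
    · obtain ⟨p, hp, hchi⟩ := chi_key N hN x y hxo hd
      exact ⟨p, hp, hchi⟩
    · have hd' : IsTwoDiag N y x := ⟨hd.2.2.1, hd.2.2.2, hd.1, hd.2.1⟩
      obtain ⟨p, hp, hchi⟩ := chi_key N hN y x hyo hd'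
      exact ⟨p, hp, by rw [hchi, Sym2.eq_swap]⟩
end

section
/- Let Q be a finite connected quiver without loops or 2-cycles such that every arrow lies in at least one chordless cycle and whose dual graph is a tree. Then every arrow of Q lies in either exactly one or exactly two chordless cycles. -/
section DimerTreeQuiver

variable (V A : Type) [Fintype V] [DecidableEq V] [Fintype A] [DecidableEq A]

/-- The list of arrows `L` is a cyclic path (each arrow's target is the next arrow's
source, cyclically) visiting pairwise distinct vertices, and it is *chordless*: the
full subquiver of `(V,A,s,t)` on the vertices of `L` consists exactly of the arrows
of `L`. -/
def IsChordlessCycleList (s t : A → V) (L : List A) : Prop :=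
  L ≠ [] ∧
  L.Chain' (fun a b => t a = s b) ∧
  (∀ a b, L.head? = some a → L.getLast? = some b → t b = s a) ∧
  (L.map s).Nodup ∧
  ∀ a : A, s a ∈ L.map s → t a ∈ L.map s → a ∈ L

/-- A chordless cycle of the quiver `(V,A,s,t)`, recorded as the (finite) set of its
arrows: some cyclic ordering of the arrows of `c` is a chordless cyclic path. -/
def IsChordlessCycle (s t : A → V) (c : Finset A) : Prop :=
  ∃ L : List A, L.toFinset = c ∧ L.Nodup ∧ IsChordlessCycleList V A s t L

/-- An arrow is a boundary arrow if it lies in exactly one chordless cycle. -/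
def IsBoundaryArrow (s t : A → V) (a : A) : Prop :=
  {c : Finset A | IsChordlessCycle V A s t c ∧ a ∈ c}.ncard = 1

/-- The vertex set of the dual graph of the quiver: chordless cycles together with
boundary arrows. -/
def DualVertex (s t : A → V) : Type :=
  {c : Finset A // IsChordlessCycle V A s t c} ⊕ {a : A // IsBoundaryArrow V A s t a}

/-- Adjacency of the dual graph: two distinct chordless cycles are adjacent iff they
share an arrow (a trunk edge); a chordless cycle and a boundary arrow are adjacent
iff the arrow is contained in the cycle (a leaf branch). -/
def DualAdj (s t : A → V) : DualVertex V A s t → DualVertex V A s t → Prop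
  | Sum.inl c, Sum.inl c' => c ≠ c' ∧ (c.1 ∩ c'.1).Nonempty
  | Sum.inl c, Sum.inr a => a.1 ∈ c.1
  | Sum.inr a, Sum.inl c => a.1 ∈ c.1
  | Sum.inr _, Sum.inr _ => False

/-- The dual graph of the quiver `(V,A,s,t)`. -/
def dualGraph (s t : A → V) : SimpleGraph (DualVertex V A s t) where
  Adj := DualAdj V A s t
  symm := by
    constructor
    rintro (c | a) (c' | a') h <;> simp only [DualAdj] at h ⊢
    · exact ⟨h.1.symm, by rw [Finset.inter_comm]; exact h.2⟩
    · exact h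
    · exact h
  loopless := by
    constructor
    rintro (c | a) h <;> simp only [DualAdj] at h
    exact h.1 rfl

/-- The underlying (simple) graph of the quiver, used to express connectedness. -/
def underlyingGraph (s t : A → V) : SimpleGraph V where
  Adj u v := u ≠ v ∧ ∃ a, (s a = u ∧ t a = v) ∨ (s a = v ∧ t a = u)
  symm := by
    constructor
    rintro u v ⟨h, a, h'⟩
    exact ⟨h.symm, a, h'.symm⟩
  loopless := by
    constructor
    rintro u ⟨h, _⟩
    exact h rfl

end DimerTreeQuiver

/-! The chordless cycles through a fixed arrow pairwise share that arrow, so they span a clique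
in the dual graph; a tree has no triangle, hence there are at most two of them. -/

section ChordlessCyclesThroughArrow

variable {V A : Type} [DecidableEq A] {s t : A → V}

lemma dualGraph_adj_of_mem_of_mem {c c' : {c : Finset A // IsChordlessCycle V A s t c}} {a : A}
    (hne : c ≠ c') (ha : a ∈ c.1) (ha' : a ∈ c'.1) :
    (dualGraph V A s t).Adj (Sum.inl c) (Sum.inl c') :=
  ⟨hne, a, Finset.mem_inter.mpr ⟨ha, ha'⟩⟩

lemma ncard_chordlessCycles_mem_le_two [Fintype A] (hacyc : (dualGraph V A s t).IsAcyclic)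
    (a : A) : {c : Finset A | IsChordlessCycle V A s t c ∧ a ∈ c}.ncard ≤ 2 := by
  classical
  by_contra! h
  obtain ⟨c₁, h₁, c₂, h₂, c₃, h₃, h₁₂, h₁₃, h₂₃⟩ := (Set.two_lt_ncard).mp h
  refine hacyc.cliqueFree le_rfl
    {(Sum.inl ⟨c₁, h₁.1⟩ : DualVertex V A s t), Sum.inl ⟨c₂, h₂.1⟩, Sum.inl ⟨c₃, h₃.1⟩} ?_
  exact SimpleGraph.is3Clique_triple_iff.mpr
    ⟨dualGraph_adj_of_mem_of_mem (mt (congrArg Subtype.val) h₁₂) h₁.2 h₂.2,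
      dualGraph_adj_of_mem_of_mem (mt (congrArg Subtype.val) h₁₃) h₁.2 h₃.2,
      dualGraph_adj_of_mem_of_mem (mt (congrArg Subtype.val) h₂₃) h₂.2 h₃.2⟩

end ChordlessCyclesThroughArrow

theorem arrow_in_one_or_two_cycles_general (V A : Type) [Fintype A] [DecidableEq A]
    (s t : A → V)
    (hcover : ∀ a : A, ∃ c : Finset A, IsChordlessCycle V A s t c ∧ a ∈ c)
    (htree : (dualGraph V A s t).IsTree) :
    ∀ a : A, {c : Finset A | IsChordlessCycle V A s t c ∧ a ∈ c}.ncard = 1 ∨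
      {c : Finset A | IsChordlessCycle V A s t c ∧ a ∈ c}.ncard = 2 := by
  intro a
  have hpos : 0 < {c : Finset A | IsChordlessCycle V A s t c ∧ a ∈ c}.ncard :=
    (Set.ncard_pos).mpr (hcover a)
  have hle := ncard_chordlessCycles_mem_le_two htree.isAcyclic a
  omega

/-- Let `Q = (V,A,s,t)` be a finite connected quiver without loops or 2-cycles such
that every arrow lies in at least one chordless cycle and whose dual graph is a tree.
Then every arrow of `Q` lies in either exactly one or exactly two chordless cycles. -/
theorem arrow_in_one_or_two_cycles (V A : Type) [Fintype V] [DecidableEq V] [Fintype A] [DecidableEq A]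
    (s t : A → V)
    (hconn : (underlyingGraph V A s t).Connected)
    (hnoloop : ∀ a, s a ≠ t a)
    (hno2cycle : ¬ ∃ a b : A, t a = s b ∧ t b = s a)
    (hcover : ∀ a : A, ∃ c : Finset A, IsChordlessCycle V A s t c ∧ a ∈ c)
    (htree : (dualGraph V A s t).IsTree) :
    ∀ a : A, {c : Finset A | IsChordlessCycle V A s t c ∧ a ∈ c}.ncard = 1 ∨
      {c : Finset A | IsChordlessCycle V A s t c ∧ a ∈ c}.ncard = 2 :=
  arrow_in_one_or_two_cycles_general V A s t hcover htree
end

section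
/- Let B be a finite-dimensional algebra and M an indecomposable non-projective module with Ext¹_B(M,P)=0 for every projective module P. If P(x) is a direct summand of the projective cover of M, then Ext¹_B(M, rad P(x)) ≠ 0. -/
/-!
Over a finite-dimensional algebra, `rad X = J·X` is the intersection of the maximal submodules
of `X`. Hence the superfluous kernel of the projective cover `p : P₀ ↠ M` lies in `rad P₀`, and
projecting `P₀` onto its summand `P(x)` induces a surjection `f : M ↠ P(x)/rad P(x)`. Pulling
`0 → rad P(x) → P(x) → P(x)/rad P(x) → 0` back along `f` gives an extension of `M` by
`rad P(x)`. A splitting would lift `f` to `g : M → P(x)`, which is onto by Nakayama; as `P(x)`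
is projective `g` splits, and since `M` is indecomposable `g` is an isomorphism, making `M`
projective.
-/

open CategoryTheory

/-- There exists a nonsplit short exact sequence `0 → N → E → M → 0`;
equivalently, `Ext¹_B(M, N) ≠ 0`. -/
def HasNonsplitExt (B : Type) [Ring B] (N M : Type) [AddCommGroup N] [Module B N]
    [AddCommGroup M] [Module B M] : Prop :=
  ∃ (E : ModuleCat.{0} B) (ι : N →ₗ[B] E) (π : E →ₗ[B] M),
    Function.Injective ι ∧ Function.Surjective π ∧
      LinearMap.range ι = LinearMap.ker π ∧
      ¬ ∃ σ : M →ₗ[B] E, π.comp σ = LinearMap.id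

/-- `M` is an indecomposable module: it is nonzero and is not the direct sum of two
nonzero submodules. -/
def IsIndecomposableModule (B M : Type) [Ring B] [AddCommGroup M] [Module B M] : Prop :=
  Nontrivial M ∧ ∀ N₁ N₂ : Submodule B M, IsCompl N₁ N₂ → N₁ = ⊥ ∨ N₂ = ⊥

/-- The radical `rad M = (rad B)·M` of a module `M` over a finite-dimensional
algebra `B`, where `rad B` is the Jacobson radical of `B`. -/
def radM (B M : Type) [Ring B] [AddCommGroup M] [Module B M] : Submodule B M :=
  Submodule.span B {x : M | ∃ r ∈ Ideal.jacobson (⊥ : Ideal B), ∃ m : M, x = r • m}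

open Function Submodule

section Radical

variable {B X : Type} [Ring B] [AddCommGroup X] [Module B X]

theorem radM_eq_jacobson [IsSemiprimaryRing B] : radM B X = Module.jacobson B X := by
  -- `X ⧸ radM B X` is a module over the semisimple ring `B ⧸ J`.
  have hJ : Module.IsTorsionBySet B (X ⧸ radM B X) (Ring.jacobson B) :=
    (Module.isTorsionBySet_quotient_iff _ _).mpr fun x r hr ↦
      subset_span ⟨r, Ideal.jacobson_bot (R := B) ▸ hr, x, rfl⟩
  let := hJ.module
  have : IsSemisimpleModule B (X ⧸ radM B X) := hJ.isSemisimpleModule_iff.mp inferInstance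
  refine le_antisymm ?_ (Module.jacobson_le_of_eq_bot (IsSemisimpleModule.jacobson_eq_bot B _))
  rw [radM, span_le]
  rintro _ ⟨r, hr, m, rfl⟩
  exact Module.le_comap_jacobson (LinearMap.toSpanSingleton B X m) (Ideal.jacobson_bot.le hr)

theorem le_jacobson_of_forall_sup_eq_top {K : Submodule B X}
    (hK : ∀ N : Submodule B X, N ⊔ K = ⊤ → N = ⊤) : K ≤ Module.jacobson B X :=
  le_sInf fun m hm ↦ by
    by_contra h
    exact hm.1 (hK m (hm.2 _ (left_lt_sup.mpr h)))

theorem eq_top_of_sup_eq_top_of_le_jacobson [IsCoatomic (Submodule B X)] {K N : Submodule B X}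
    (hK : K ≤ Module.jacobson B X) (h : N ⊔ K = ⊤) : N = ⊤ := by
  by_contra hN
  obtain ⟨m, hm, hNm⟩ := (eq_top_or_exists_le_coatom N).resolve_left hN
  exact hm.1 (top_le_iff.mp (h ▸ sup_le hNm (hK.trans (sInf_le hm))))

theorem surjective_of_surjective_mkQ_comp [Module.Finite B X] {M : Type} [AddCommGroup M]
    [Module B M] {K : Submodule B X} (hK : K ≤ Module.jacobson B X) {g : M →ₗ[B] X}
    (hg : Surjective (K.mkQ ∘ₗ g)) : Surjective g := by
  rw [← LinearMap.range_eq_top] at hg ⊢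
  refine eq_top_of_sup_eq_top_of_le_jacobson hK ?_
  rw [← K.ker_mkQ, ← comap_map_eq, ← LinearMap.range_comp, hg, comap_top]

end Radical

theorem Module.Finite.of_surjective_of_forall_sup_ker_eq_top {B X M : Type} [Ring B]
    [AddCommGroup X] [Module B X] [AddCommGroup M] [Module B M] [Module.Finite B M]
    {p : X →ₗ[B] M} (hp : Surjective p)
    (hmin : ∀ N : Submodule B X, N ⊔ LinearMap.ker p = ⊤ → N = ⊤) : Module.Finite B X := by
  obtain ⟨n, s, hs⟩ := Module.Finite.exists_fin (R := B) (M := M)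
  refine ⟨fg_def.mpr ⟨Set.range (surjInv hp ∘ s), Set.finite_range _, hmin _ ?_⟩⟩
  rw [← comap_map_eq, map_span, ← Set.range_comp, ← comp_assoc, comp_surjInv hp, id_comp, hs,
    comap_top]

theorem LinearMap.exists_comp_eq_of_ker_le {B X Y Z : Type} [Ring B] [AddCommGroup X]
    [Module B X] [AddCommGroup Y] [Module B Y] [AddCommGroup Z] [Module B Z] {p : X →ₗ[B] Y}
    (hp : Surjective p) {h : X →ₗ[B] Z} (hle : ker p ≤ ker h) : ∃ f : Y →ₗ[B] Z, f ∘ₗ p = h :=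
  ⟨(ker p).liftQ h hle ∘ₗ (p.quotKerEquivOfSurjective hp).symm, by
    ext x
    simp⟩

theorem exists_mkQ_comp_eq_of_not_hasNonsplitExt {B P M : Type} [Ring B] [AddCommGroup P]
    [Module B P] [AddCommGroup M] [Module B M] (K : Submodule B P) (f : M →ₗ[B] P ⧸ K)
    (h : ¬ HasNonsplitExt B K M) : ∃ g : M →ₗ[B] P, K.mkQ ∘ₗ g = f := by
  -- the pullback of `K.mkQ` along `f`
  let E := (K.mkQ ∘ₗ LinearMap.fst B P M).eqLocus (f ∘ₗ LinearMap.snd B P M)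
  have mem_E {x : P} {m : M} : (x, m) ∈ E ↔ K.mkQ x = f m := Iff.rfl
  let ι : K →ₗ[B] E := (LinearMap.inl B P M ∘ₗ K.subtype).codRestrict E fun x ↦ by
    simp [E]
  let π : E →ₗ[B] M := LinearMap.snd B P M ∘ₗ E.subtype
  by_contra hg
  refine h ⟨ModuleCat.of B E, ι, π, fun x y hxy ↦ Subtype.ext congr(($hxy).1.1),
    fun m ↦ ?_, ?_, ?_⟩
  · obtain ⟨x, hx⟩ := K.mkQ_surjective (f m)
    exact ⟨⟨(x, m), mem_E.mpr hx⟩, rfl⟩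
  · ext ⟨⟨x, m⟩, hxm⟩
    rw [LinearMap.mem_ker]
    constructor
    · rintro ⟨k, hk⟩
      exact congr(($hk).1.2).symm
    · rintro (rfl : m = 0)
      exact ⟨⟨x, by simpa using mem_E.mp hxm⟩, rfl⟩
  · rintro ⟨σ, hσ⟩
    refine hg ⟨LinearMap.fst B P M ∘ₗ E.subtype ∘ₗ σ, LinearMap.ext fun m ↦ ?_⟩
    have hm : (σ m : P × M).2 = m := congr(($hσ) m)
    exact ((σ m).2 : K.mkQ _ = f _).trans (congrArg f hm)

theorem injective_of_surjective_of_isIndecomposableModule {B M P : Type} [Ring B]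
    [AddCommGroup M] [Module B M] [AddCommGroup P] [Module B P] [Nontrivial P]
    [Module.Projective B P] (hM : IsIndecomposableModule B M) {g : M →ₗ[B] P}
    (hg : Surjective g) : Injective g := by
  obtain ⟨s, hs⟩ := g.exists_rightInverse_of_surjective (LinearMap.range_eq_top.mpr hg)
  have hcompl := LinearMap.IsIdempotentElem.isCompl (f := s ∘ₗ g)
    (show s ∘ₗ (g ∘ₗ s) ∘ₗ g = s ∘ₗ g by rw [hs, LinearMap.id_comp])
  rcases hM.2 _ _ hcompl with hrange | hker
  · obtain ⟨y, hy⟩ := exists_ne (0 : P)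
    obtain ⟨m, rfl⟩ := hg y
    refine absurd ?_ hy
    calc g m = g (s (g m)) := congr(($hs) (g m)).symm
      _ = 0 := by
        rw [← LinearMap.comp_apply s g, LinearMap.range_eq_bot.mp hrange, LinearMap.zero_apply,
          map_zero]
  · rw [← LinearMap.ker_eq_bot, eq_bot_iff, ← hker]
    exact LinearMap.ker_le_ker_comp g s

theorem summand_of_cover_implies_ext_rad_nonzero_general
    (𝕜 B : Type) [Field 𝕜] [Ring B] [Algebra 𝕜 B]
    [FiniteDimensional 𝕜 B]
    (M : Type) [AddCommGroup M] [Module B M] [Module.Finite B M]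
    (hind : IsIndecomposableModule B M)
    (hnonproj : ¬ Module.Projective B M)
    (P₀ : Type) [AddCommGroup P₀] [Module B P₀]
    (p : P₀ →ₗ[B] M) (hp : Function.Surjective p)
    (hmin₀ : ∀ N : Submodule B P₀, N ⊔ LinearMap.ker p = ⊤ → N = ⊤)
    (Px : Type) [AddCommGroup Px] [Module B Px]
    (hPx : Module.Projective B Px) (hPxind : IsIndecomposableModule B Px)
    (hsummand : ∃ N N' : Submodule B P₀, IsCompl N N' ∧ Nonempty (↥N ≃ₗ[B] Px)) :
    HasNonsplitExt B (↥(radM B Px)) M := by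
  obtain ⟨N, N', hNN', ⟨e⟩⟩ := hsummand
  have : IsArtinianRing B := .of_finite 𝕜 B
  have : Nontrivial Px := hPxind.1
  have : Module.Finite B P₀ := .of_surjective_of_forall_sup_ker_eq_top hp hmin₀
  let q : P₀ →ₗ[B] Px := e ∘ₗ N.projectionOnto N' hNN'
  have hq : Surjective q := e.surjective.comp (projectionOnto_surjective hNN')
  have : Module.Finite B Px := .of_surjective q hq
  have hker : LinearMap.ker p ≤ LinearMap.ker ((radM B Px).mkQ ∘ₗ q) := by
    rw [LinearMap.ker_comp, ker_mkQ, ← map_le_iff_le_comap, radM_eq_jacobson]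
    exact (map_mono (le_jacobson_of_forall_sup_eq_top hmin₀)).trans (Module.map_jacobson_le q)
  obtain ⟨f, hf⟩ := LinearMap.exists_comp_eq_of_ker_le hp hker
  have hfsurj : Surjective f := .of_comp (g := p) <| by
    rw [← LinearMap.coe_comp, hf]
    exact (mkQ_surjective _).comp hq
  by_contra hsplit
  obtain ⟨g, hg⟩ := exists_mkQ_comp_eq_of_not_hasNonsplitExt _ f hsplit
  have hgsurj : Surjective g :=
    surjective_of_surjective_mkQ_comp radM_eq_jacobson.le (by rwa [hg])
  exact hnonproj (.of_equiv (LinearEquiv.ofBijective g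
    ⟨injective_of_surjective_of_isIndecomposableModule hind hgsurj, hgsurj⟩).symm)

/-- Let `B` be a finite-dimensional (basic) algebra over an algebraically closed field
and `M` an indecomposable non-projective `B`-module with `Ext¹_B(M,P) = 0` for every
projective module `P` (i.e. every short exact sequence `0 → P → E → M → 0` with `P`
projective splits).  Let `p : P₀ → M` be a projective cover of `M`.  If the
indecomposable projective `P(x) = Px` is a direct summand of `P₀`, then
`Ext¹_B(M, rad P(x)) ≠ 0`. -/
theorem summand_of_cover_implies_ext_rad_nonzero
    (𝕜 B : Type) [Field 𝕜] [IsAlgClosed 𝕜] [Ring B] [Algebra 𝕜 B]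
    [FiniteDimensional 𝕜 B]
    (M : Type) [AddCommGroup M] [Module B M] [Module.Finite B M]
    (hind : IsIndecomposableModule B M)
    (hnonproj : ¬ Module.Projective B M)
    (hext : ∀ P : ModuleCat.{0} B, Module.Projective B P → ¬ HasNonsplitExt B P M)
    (P₀ : Type) [AddCommGroup P₀] [Module B P₀]
    (hP₀ : Module.Projective B P₀)
    (p : P₀ →ₗ[B] M) (hp : Function.Surjective p)
    (hmin₀ : ∀ N : Submodule B P₀, N ⊔ LinearMap.ker p = ⊤ → N = ⊤)
    (Px : Type) [AddCommGroup Px] [Module B Px]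
    (hPx : Module.Projective B Px) (hPxind : IsIndecomposableModule B Px)
    (hsummand : ∃ N N' : Submodule B P₀, IsCompl N N' ∧ Nonempty (↥N ≃ₗ[B] Px)) :
    HasNonsplitExt B (↥(radM B Px)) M :=
  summand_of_cover_implies_ext_rad_nonzero_general 𝕜 B M hind hnonproj P₀ p hp hmin₀ Px hPx hPxind
    hsummand
end
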